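/- Let d ≥ 3 and let M₁,…,M_m, N₁,…,N_n be oriented closed connected d-manifolds with ‖M_j‖ > 0 for all j, ‖N_k‖ = 0 for all k, and m + n − 1 − Σ_k 1/|π₁(N_k)| > Σ_j ‖M_j‖. Assume: (i) simplicial volume is additive under connected sums in dimension ≥ 3; (ii) the first L²-Betti number satisfies b₁⁽²⁾(X) ≤ ‖X‖_ℤ^∞ (stable integral simplicial volume) for closed manifolds; (iii) the connected sum formula b₁⁽²⁾(M) = m+n−1 + Σ_j (b₁⁽²⁾(M_j) − b₀⁽²⁾(M_j)) + Σ_k (b₁⁽²⁾(N_k) − b₀⁽²⁾(N_k)); (iv) b₀⁽²⁾(X) = 1/|π₁(X)|; (v) manifolds with positive simplicial volume have infinite fundamental group. Then ‖M₁ # … # M_m # N₁ # … # N_n‖ < ‖M₁ # … # N_n‖_ℤ^∞. -/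
import Mathlib

/-- non-approximation theorem, arithmetic/axiomatic form: let
`M₁,…,M_m, N₁,…,N_n` be closed `d`-manifolds (`d ≥ 3`) with simplicial volumes
`svM j > 0`, `svN k = 0` and `m + n − 1 − Σ_k 1/|π₁(N_k)| > Σ_j svM j`
(`invPiN k = 1/|π₁(N_k)| ≥ 0`, with `1/∞ = 0`).  Assume:
(i) additivity of simplicial volume under connected sums;
(ii) `b₁⁽²⁾ ≤ ‖·‖_ℤ^∞` for the connected sum;
(iii) the connected sum formula for first `L²`-Betti numbers;
(iv) `b₀⁽²⁾(N_k) = 1/|π₁(N_k)|`;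
(v) manifolds with positive simplicial volume have infinite fundamental group, so
    `b₀⁽²⁾(M_j) = 0`.
Then the connected sum `M` satisfies `‖M‖ < ‖M‖_ℤ^∞`. -/
theorem nonapproximation (d m n : ℕ) (hd : 3 ≤ d)
    (svM : Fin m → ℝ) (svN : Fin n → ℝ)
    (b1M b0M : Fin m → ℝ) (b1N b0N : Fin n → ℝ)
    (invPiN : Fin n → ℝ)
    (svSum stisvSum b1Sum : ℝ)
    (hsvM : ∀ j, 0 < svM j) (hsvN : ∀ k, svN k = 0)
    (hinvN : ∀ k, 0 ≤ invPiN k)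
    (hgap : (m : ℝ) + n - 1 - ∑ k, invPiN k > ∑ j, svM j)
    (hadd : svSum = ∑ j, svM j + ∑ k, svN k)
    (hb1le : b1Sum ≤ stisvSum)
    (hconn : b1Sum = (m : ℝ) + n - 1 + ∑ j, (b1M j - b0M j) + ∑ k, (b1N k - b0N k))
    (hb0N : ∀ k, b0N k = invPiN k)
    (hb0M : ∀ j, b0M j = 0)
    (hb1M : ∀ j, 0 ≤ b1M j) (hb1N : ∀ k, 0 ≤ b1N k) :
    svSum < stisvSum := by
  have h1 : svSum = ∑ j, svM j := by
    simp [hadd, hsvN]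
  have h2 : (0:ℝ) ≤ ∑ j, (b1M j - b0M j) := by
    apply Finset.sum_nonneg; intro j _; simp [hb0M j, hb1M j]
  have h3 : ∑ k, (b1N k - b0N k) ≥ - ∑ k, invPiN k := by
    rw [← Finset.sum_neg_distrib]
    apply Finset.sum_le_sum; intro k _; simp [hb0N k]; linarith [hb1N k]
  have : svSum < b1Sum := by rw [h1, hconn]; linarith
  linarith
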